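/- Under the stated bilevel setting with constraints, assumptions (A1)–(A3), and the stated approximation scheme with μ_k → 0 and θ_k → 0: suppose (x_k) converges to x̄ ∈ X, (y_k) converges to ŷ in ℝ^n, and the three sequences P_{H,k}(H(x_k,y_k)), P_{h,k}(h(x_k,y_k)) and P_{f,k}( f(x_k,y_k) − f_k*(x_k) ) all have finite lim sup as k → ∞. Then H(x̄,ŷ) ≤ 0, h(x̄,ŷ) ≤ 0 and f(x̄,ŷ) ≤ f*(x̄); in particular ŷ ∈ S(x̄) and ŷ is feasible for the problem defining φ(x̄). -/

import Mathlib

open Filter Topology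

noncomputable section

/-- `ℝ^m` as a Euclidean space. -/
abbrev Evec (m : ℕ) := EuclideanSpace ℝ (Fin m)

/-- The lower-level value function `f*(x) = inf { f(x,y) : h(x,y) ≤ 0 }`,
taken in the extended reals (so `inf ∅ = +∞`). -/
def lowerValue {m n : ℕ} (f h : Evec m → Evec n → ℝ) (x : Evec m) : EReal :=
  ⨅ y ∈ {y : Evec n | h x y ≤ 0}, ((f x y : ℝ) : EReal)

/-- The lower-level solution set `S(x) = argmin { f(x,y) : h(x,y) ≤ 0 }`. -/
def lowerArgmin {m n : ℕ} (f h : Evec m → Evec n → ℝ) (x : Evec m) : Set (Evec n) :=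
  {y | h x y ≤ 0 ∧ ∀ y', h x y' ≤ 0 → f x y ≤ f x y'}

/-- The upper-level value function
`φ(x) = inf { F(x,y) : H(x,y) ≤ 0, h(x,y) ≤ 0, f(x,y) ≤ f*(x) }`,
taken in the extended reals (so `inf ∅ = +∞`). -/
def upperValue {m n : ℕ} (F f H h : Evec m → Evec n → ℝ) (x : Evec m) : EReal :=
  ⨅ y ∈ {y : Evec n |
      H x y ≤ 0 ∧ h x y ≤ 0 ∧ ((f x y : ℝ) : EReal) ≤ lowerValue f h x},
    ((F x y : ℝ) : EReal)

/-- Canonical monotone extension of a nondecreasing function `P : ℝ → [0,+∞]`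
to extended-real arguments (agrees with `P` on `ℝ` when `P` is nondecreasing and
continuous). -/
def erealExt (P : ℝ → EReal) : EReal → EReal := fun e =>
  haveI := Classical.dec (e = ⊥)
  if e = ⊥ then ⨅ r : ℝ, P r else sSup (P '' {r : ℝ | (r : EReal) ≤ e})

/-- The regularized barrier value function
`f_k*(x) = inf_y ( f(x,y) + P_{B,k}(h(x,y)) + (μ_k/2)‖y‖² )`. -/
def fkstar {m n : ℕ} (f h : Evec m → Evec n → ℝ) (PB : ℕ → ℝ → EReal)
    (μ : ℕ → ℝ) (k : ℕ) (x : Evec m) : EReal :=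
  ⨅ y : Evec n, (((f x y + μ k / 2 * ‖y‖ ^ 2 : ℝ) : EReal) + PB k (h x y))

/-- The approximate upper-level value function
`φ_k(x) = inf_y ( F(x,y) + P_{H,k}(H(x,y)) + P_{h,k}(h(x,y))
  + P_{f,k}( f(x,y) − f_k*(x) ) + (θ_k/2)‖y‖² )`. -/
def phik {m n : ℕ} (F f H h : Evec m → Evec n → ℝ)
    (PB PH Ph Pf : ℕ → ℝ → EReal) (μ θ : ℕ → ℝ) (k : ℕ) (x : Evec m) : EReal :=
  ⨅ y : Evec n,
    (((F x y + θ k / 2 * ‖y‖ ^ 2 : ℝ) : EReal) + PH k (H x y) + Ph k (h x y)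
      + erealExt (Pf k) (((f x y : ℝ) : EReal) - fkstar f h PB μ k x))

/-- The indicator function `δ_X` of a set `X`. -/
def deltaInd {m : ℕ} (X : Set (Evec m)) (x : Evec m) : EReal :=
  haveI := Classical.dec (x ∈ X)
  if x ∈ X then 0 else ⊤

/-- A family of auxiliary (penalty or modified barrier) functions `ℝ → [0,+∞]`:
each is nonnegative, nondecreasing and continuous; `P_k(ω) → 0` for every `ω ≤ 0`;
and whenever `limsup_k P_k(ω_k) < +∞` for a real sequence `(ω_k)` one has
`limsup_k ω_k ≤ 0`. -/
def AuxFamily (P : ℕ → ℝ → EReal) : Prop :=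
  (∀ k ω, 0 ≤ P k ω) ∧ (∀ k, Monotone (P k)) ∧ (∀ k, Continuous (P k)) ∧
    (∀ ω : ℝ, ω ≤ 0 → Tendsto (fun k => P k ω) atTop (𝓝 0)) ∧
    (∀ ω : ℕ → ℝ, limsup (fun k => P k (ω k)) atTop < ⊤ →
      limsup (fun k => ((ω k : ℝ) : EReal)) atTop ≤ 0)

/-- A family of barrier functions `ℝ → [0,+∞]`: each is nonnegative and
nondecreasing, equal to `+∞` on `[0,∞)`, with `P_{B,k}(ω) → 0` for every `ω < 0`. -/
def BarrierFamily (PB : ℕ → ℝ → EReal) : Prop :=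
  (∀ k ω, 0 ≤ PB k ω) ∧ (∀ k, Monotone (PB k)) ∧
    (∀ k, ∀ ω : ℝ, 0 ≤ ω → PB k ω = ⊤) ∧
    (∀ ω : ℝ, ω < 0 → Tendsto (fun k => PB k ω) atTop (𝓝 0))

/-- `g` is level-bounded in `y` locally uniformly in `x ∈ X`. -/
def LevelBoundedUnif {m n : ℕ} (g : Evec m → Evec n → ℝ) (X : Set (Evec m)) : Prop :=
  ∀ x₀ ∈ X, ∀ c : ℝ, ∃ δ > (0 : ℝ), ∃ B : Set (Evec n), Bornology.IsBounded B ∧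
    ∀ x ∈ X, ‖x - x₀‖ ≤ δ → {y | g x y ≤ c} ⊆ B

end


private lemma erealExt_coe_of_monotone {P : ℝ → EReal} (hP : Monotone P) (w : ℝ) :
    erealExt P ((w : ℝ) : EReal) = P w := by
  rw [erealExt]
  rw [if_neg (by simp)]
  apply le_antisymm
  · refine sSup_le ?_
    rintro _ ⟨r, hr, rfl⟩
    exact hP (by exact_mod_cast hr)
  · exact le_sSup ⟨w, by simp, rfl⟩

theorem BVFSM_feasibility_of_limits
    {m n : ℕ} (F f H h : Evec m → Evec n → ℝ) (X : Set (Evec m))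
    (PB PH Ph Pf : ℕ → ℝ → EReal) (μ θ : ℕ → ℝ)
    (hX : IsCompact X)
    (hFc : Continuous fun p : Evec m × Evec n => F p.1 p.2)
    (hfc : Continuous fun p : Evec m × Evec n => f p.1 p.2)
    (hHc : Continuous fun p : Evec m × Evec n => H p.1 p.2)
    (hhc : Continuous fun p : Evec m × Evec n => h p.1 p.2)
    (hfbd : ∃ cf : ℝ, ∀ x y, cf ≤ f x y)
    (hA1 : ∀ x ∈ X, (lowerArgmin f h x).Nonempty)
    (hA2 : LevelBoundedUnif F X)
    (hA3 : ∀ x y, h x y = 0 → ∀ ε > (0 : ℝ), ∃ y', ‖y' - y‖ < ε ∧ h x y' < 0)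
    (hμpos : ∀ k, 0 < μ k) (hθpos : ∀ k, 0 < θ k)
    (hμ0 : Tendsto μ atTop (𝓝 0)) (hθ0 : Tendsto θ atTop (𝓝 0))
    (hPB : BarrierFamily PB) (hPH : AuxFamily PH)
    (hPh : AuxFamily Ph) (hPf : AuxFamily Pf)
    (xs : ℕ → Evec m) (ys : ℕ → Evec n) (xb : Evec m) (yh : Evec n)
    (hxb : xb ∈ X) (hxs : Tendsto xs atTop (𝓝 xb)) (hys : Tendsto ys atTop (𝓝 yh))
    (hPHlim : limsup (fun k => PH k (H (xs k) (ys k))) atTop < ⊤)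
    (hPhlim : limsup (fun k => Ph k (h (xs k) (ys k))) atTop < ⊤)
    (hPflim : limsup
      (fun k => erealExt (Pf k) (((f (xs k) (ys k) : ℝ) : EReal) - fkstar f h PB μ k (xs k)))
      atTop < ⊤)
    :
    H xb yh ≤ 0 ∧ h xb yh ≤ 0 ∧ ((f xb yh : ℝ) : EReal) ≤ lowerValue f h xb ∧
      yh ∈ lowerArgmin f h xb := by

  have hprod : Tendsto (fun k => (xs k, ys k)) atTop (𝓝 (xb, yh)) :=
    hxs.prodMk_nhds hys
  have key0 : ∀ (G : Evec m → Evec n → ℝ),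
      Continuous (fun p : Evec m × Evec n => G p.1 p.2) →
      limsup (fun k => ((G (xs k) (ys k) : ℝ) : EReal)) atTop ≤ 0 → G xb yh ≤ 0 := by
    intro G hGc hlim
    have t : Tendsto (fun k => ((G (xs k) (ys k) : ℝ) : EReal)) atTop
        (𝓝 ((G xb yh : ℝ) : EReal)) :=
      (continuous_coe_real_ereal.tendsto _).comp ((hGc.tendsto (xb, yh)).comp hprod)
    rw [t.limsup_eq] at hlim
    exact_mod_cast hlim
  have hHle : H xb yh ≤ 0 := key0 H hHc (hPH.2.2.2.2 _ hPHlim)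
  have hhle : h xb yh ≤ 0 := key0 h hhc (hPh.2.2.2.2 _ hPhlim)
  obtain ⟨cf, hcf⟩ := hfbd
  -- lower bound on fkstar
  have hfk_lb : ∀ k, ((cf : ℝ) : EReal) ≤ fkstar f h PB μ k (xs k) := by
    intro k
    refine le_iInf fun y => ?_
    have h1 : ((cf : ℝ) : EReal) ≤ ((f (xs k) y + μ k / 2 * ‖y‖ ^ 2 : ℝ) : EReal) := by
      have := hcf (xs k) y
      have hμ := (hμpos k).le
      exact_mod_cast (by nlinarith [sq_nonneg ‖y‖] : cf ≤ f (xs k) y + μ k / 2 * ‖y‖ ^ 2)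
    calc ((cf : ℝ) : EReal) ≤ _ := h1
      _ ≤ _ + PB k (h (xs k) y) := le_add_of_nonneg_right (hPB.1 k _)
  -- upper bound on fkstar
  have hub : ∀ z : Evec n, h xb z < 0 → ∀ ε : ℝ, 0 < ε →
      ∀ᶠ k in atTop, fkstar f h PB μ k (xs k) ≤ ((f xb z + ε : ℝ) : EReal) := by
    intro z hz ε hε
    have hxz : Tendsto (fun k => (xs k, z)) atTop (𝓝 (xb, z)) :=
      hxs.prodMk_nhds tendsto_const_nhds
    have E1 : ∀ᶠ k in atTop, h (xs k) z < h xb z / 2 :=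
      ((hhc.tendsto (xb, z)).comp hxz).eventually_lt_const (by linarith)
    have E2 : ∀ᶠ k in atTop, f (xs k) z < f xb z + ε / 3 :=
      ((hfc.tendsto (xb, z)).comp hxz).eventually_lt_const (by linarith)
    have E3 : ∀ᶠ k in atTop, μ k / 2 * ‖z‖ ^ 2 < ε / 3 := by
      have ht : Tendsto (fun k => μ k / 2 * ‖z‖ ^ 2) atTop (𝓝 0) := by
        simpa using (hμ0.div_const 2).mul_const (‖z‖ ^ 2)
      exact ht.eventually_lt_const (by linarith)
    have E4 : ∀ᶠ k in atTop, PB k (h xb z / 2) < ((ε / 3 : ℝ) : EReal) :=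
      (hPB.2.2.2 _ (by linarith)).eventually_lt_const
        (by exact_mod_cast (by linarith : (0:ℝ) < ε / 3))
    filter_upwards [E1, E2, E3, E4] with k e1 e2 e3 e4
    have step1 : fkstar f h PB μ k (xs k) ≤
        ((f (xs k) z + μ k / 2 * ‖z‖ ^ 2 : ℝ) : EReal) + PB k (h (xs k) z) :=
      iInf_le _ z
    have step2 : PB k (h (xs k) z) ≤ PB k (h xb z / 2) := hPB.2.1 k e1.le
    calc fkstar f h PB μ k (xs k)
        ≤ ((f (xs k) z + μ k / 2 * ‖z‖ ^ 2 : ℝ) : EReal) + PB k (h xb z / 2) :=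
          step1.trans (add_le_add_right step2 _)
      _ ≤ ((f xb z + ε / 3 + ε / 3 : ℝ) : EReal) + ((ε / 3 : ℝ) : EReal) :=
          add_le_add (by exact_mod_cast (by linarith : f (xs k) z + μ k / 2 * ‖z‖ ^ 2 ≤ f xb z + ε / 3 + ε / 3)) e4.le
      _ = ((f xb z + ε : ℝ) : EReal) := by
          rw [← EReal.coe_add]
          norm_cast
          ring
  -- a point with strictly feasible lower-level constraint
  obtain ⟨y₀, hy₀, -⟩ := hA1 xb hxb
  obtain ⟨z₀, hz₀⟩ : ∃ z, h xb z < 0 := by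
    rcases lt_or_eq_of_le hy₀ with hlt | heq
    · exact ⟨y₀, hlt⟩
    · obtain ⟨y', -, hy'⟩ := hA3 xb y₀ heq 1 one_pos
      exact ⟨y', hy'⟩
  set b : ℕ → ℝ := fun k => (fkstar f h PB μ k (xs k)).toReal with hbdef
  have hfin : ∀ᶠ k in atTop, fkstar f h PB μ k (xs k) = ((b k : ℝ) : EReal) := by
    filter_upwards [hub z₀ hz₀ 1 one_pos] with k hk
    have hnetop : fkstar f h PB μ k (xs k) ≠ ⊤ :=
      (hk.trans_lt (EReal.coe_lt_top _)).ne
    have hnebot : fkstar f h PB μ k (xs k) ≠ ⊥ :=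
      ((EReal.bot_lt_coe cf).trans_le (hfk_lb k)).ne'
    exact (EReal.coe_toReal hnetop hnebot).symm
  set w : ℕ → ℝ := fun k => f (xs k) (ys k) - b k with hwdef
  have hPfw : limsup (fun k => Pf k (w k)) atTop < ⊤ := by
    have heq : ∀ᶠ k in atTop, Pf k (w k) =
        erealExt (Pf k) (((f (xs k) (ys k) : ℝ) : EReal) - fkstar f h PB μ k (xs k)) := by
      filter_upwards [hfin] with k hk
      rw [hk, ← EReal.coe_sub, erealExt_coe_of_monotone (hPf.2.1 k)]
    rwa [limsup_congr heq]
  have hwlim : limsup (fun k => ((w k : ℝ) : EReal)) atTop ≤ 0 := hPf.2.2.2.2 w hPfw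
  -- main comparison with strictly feasible points
  have main : ∀ z, h xb z < 0 → f xb yh ≤ f xb z := by
    intro z hz
    by_contra hcon
    push_neg at hcon
    set ε := (f xb yh - f xb z) / 3 with hεdef
    have hεpos : 0 < ε := by
      rw [hεdef]; linarith
    have E1 : ∀ᶠ k in atTop, f xb yh - ε < f (xs k) (ys k) :=
      ((hfc.tendsto (xb, yh)).comp hprod).eventually_const_lt (by linarith)
    have E2 : ∀ᶠ k in atTop, b k ≤ f xb z + ε := by
      filter_upwards [hub z hz ε hεpos, hfin] with k hk hk2
      rw [hk2] at hk
      exact_mod_cast hk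
    have E3 : ∀ᶠ k in atTop, ((ε : ℝ) : EReal) ≤ ((w k : ℝ) : EReal) := by
      filter_upwards [E1, E2] with k e1 e2
      have : ε ≤ w k := by
        rw [hwdef]
        simp only
        rw [hεdef] at *
        linarith
      exact_mod_cast this
    have hle : ((ε : ℝ) : EReal) ≤ limsup (fun k => ((w k : ℝ) : EReal)) atTop :=
      le_limsup_of_frequently_le E3.frequently
        (isBoundedUnder_of ⟨⊤, fun k => le_top⟩)
    have : ((ε : ℝ) : EReal) ≤ 0 := hle.trans hwlim
    have : ε ≤ 0 := by exact_mod_cast this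
    linarith
  -- extend to all feasible points
  have main2 : ∀ y, h xb y ≤ 0 → f xb yh ≤ f xb y := by
    intro y hy
    by_contra hcon
    push_neg at hcon
    set ε := (f xb yh - f xb y) / 2 with hεdef
    have hεpos : 0 < ε := by rw [hεdef]; linarith
    have hcx : ContinuousAt (fun y' => f xb y') y := by
      have : Continuous (fun y' : Evec n => f xb y') :=
        hfc.comp (continuous_const.prodMk continuous_id)
      exact this.continuousAt
    obtain ⟨δ, hδpos, hδ⟩ := Metric.continuousAt_iff.mp hcx ε hεpos
    rcases lt_or_eq_of_le hy with hlt | heq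
    · exact absurd (main y hlt) (not_le.mpr hcon)
    · obtain ⟨y', hy'd, hy'⟩ := hA3 xb y heq δ hδpos
      have h1 := main y' hy'
      have h2 : dist (f xb y') (f xb y) < ε := hδ (by rwa [dist_eq_norm])
      rw [Real.dist_eq] at h2
      have := abs_lt.mp h2
      rw [hεdef] at *
      linarith [this.1, this.2]
  refine ⟨hHle, hhle, ?_, hhle, main2⟩
  refine le_iInf₂ fun y hy => ?_
  exact_mod_cast main2 y hy
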